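/- For constants a, b > 0 and c > 0, the function h(t) = t·√(a·2^{c/t} + b·(2^{c/t})²) is convex on t ∈ (0, ∞). -/

import Mathlib

/-!
The function is the perspective `t ↦ t • g (t⁻¹ • c)` of `g x = √(a·2^x + b·(2^x)²)`, and the
perspective of a convex function is convex. In turn `g x` is the Euclidean norm of the vector
`(√a·(√2)^x, √b·2^x)`, whose components are nonnegative and convex; since the Euclidean norm is
convex and monotone on the nonnegative orthant, `g` is convex.
-/

section Perspective

variable {E β : Type*} [AddCommMonoid E] [Module ℝ E] [AddCommMonoid β] [PartialOrder β]
  [Module ℝ β] [PosSMulMono ℝ β]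

lemma inv_smul_eq_add_smul_inv_smul (x : E) {t u p q : ℝ} (ht : 0 < t) (hu : 0 < u)
    (hpq : p + q = 1) :
    (p * t + q * u)⁻¹ • x
      = (p * t / (p * t + q * u)) • (t⁻¹ • x) + (q * u / (p * t + q * u)) • (u⁻¹ • x) := by
  rw [smul_smul, smul_smul, ← add_smul]
  congr 1
  field_simp
  rw [hpq]

theorem ConvexOn.perspective {s : Set E} {f : E → β} (hf : ConvexOn ℝ s f) (x : E) :
    ConvexOn ℝ {t : ℝ | 0 < t ∧ t⁻¹ • x ∈ s} (fun t => t • f (t⁻¹ • x)) := by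
  have weights : ∀ {t u p q : ℝ}, 0 < t → 0 < u → 0 ≤ p → 0 ≤ q → p + q = 1 →
      0 < p * t + q * u ∧ p * t / (p * t + q * u) + q * u / (p * t + q * u) = 1 := by
    intro t u p q ht hu hp hq hpq
    have hz : 0 < p * t + q * u := convex_Ioi (0 : ℝ) ht hu hp hq hpq
    exact ⟨hz, by field_simp⟩
  refine ⟨?_, ?_⟩ <;> rintro t ⟨ht, hxt⟩ u ⟨hu, hxu⟩ p q hp hq hpq <;>
    obtain ⟨hz, hw⟩ := weights ht hu hp hq hpq <;> simp only [smul_eq_mul]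
  · refine ⟨hz, ?_⟩
    rw [inv_smul_eq_add_smul_inv_smul x ht hu hpq]
    exact hf.1 hxt hxu (by positivity) (by positivity) hw
  · calc (p * t + q * u) • f ((p * t + q * u)⁻¹ • x)
        ≤ (p * t + q * u) • ((p * t / (p * t + q * u)) • f (t⁻¹ • x)
            + (q * u / (p * t + q * u)) • f (u⁻¹ • x)) := by
          rw [inv_smul_eq_add_smul_inv_smul x ht hu hpq]
          exact smul_le_smul_of_nonneg_left
            (hf.2 hxt hxu (by positivity) (by positivity) hw) hz.le
      _ = p • t • f (t⁻¹ • x) + q • u • f (u⁻¹ • x) := by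
          rw [smul_add, smul_smul, smul_smul, smul_smul p, smul_smul q]
          congr 2 <;> field_simp

end Perspective

theorem ConvexOn.sqrt_sum_sq {E ι : Type*} [AddCommMonoid E] [Module ℝ E] [Fintype ι]
    {s : Set E} {f : ι → E → ℝ} (hs : Convex ℝ s) (hf : ∀ i, ConvexOn ℝ s (f i))
    (hf₀ : ∀ i, ∀ x ∈ s, 0 ≤ f i x) :
    ConvexOn ℝ s (fun x => √(∑ i, f i x ^ 2)) := by
  set v : E → EuclideanSpace ℝ ι := fun x => WithLp.toLp 2 (f · x)
  have norm_v : ∀ x, ‖v x‖ = √(∑ i, f i x ^ 2) := by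
    simp [v, EuclideanSpace.norm_eq]
  refine ⟨hs, fun x hx y hy p q hp hq hpq => ?_⟩
  simp only [← norm_v, smul_eq_mul]
  calc ‖v (p • x + q • y)‖ ≤ ‖p • v x + q • v y‖ := by
        simp only [EuclideanSpace.norm_eq, v]
        gcongr with i
        have hz := hf₀ i _ (hs hx hy hp hq hpq)
        have hcomb := add_nonneg (mul_nonneg hp (hf₀ i x hx)) (mul_nonneg hq (hf₀ i y hy))
        simp only [PiLp.add_apply, PiLp.smul_apply, smul_eq_mul, Real.norm_of_nonneg hz,
          Real.norm_of_nonneg hcomb]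
        exact (hf i).2 hx hy hp hq hpq
    _ ≤ p * ‖v x‖ + q * ‖v y‖ := (convexOn_norm convex_univ).2 trivial trivial hp hq hpq

lemma sqrt_two_rpow_sq (x : ℝ) : ((√2) ^ x) ^ 2 = (2 : ℝ) ^ x := by
  rw [sq, ← Real.mul_rpow (by positivity) (by positivity), Real.mul_self_sqrt zero_le_two]

theorem convexOn_sqrt_mul_two_rpow_add {a b : ℝ} (ha : 0 ≤ a) (hb : 0 ≤ b) :
    ConvexOn ℝ Set.univ (fun x : ℝ => √(a * (2 : ℝ) ^ x + b * ((2 : ℝ) ^ x) ^ 2)) := by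
  refine (ConvexOn.sqrt_sum_sq (f := ![fun x : ℝ => √a * (√2) ^ x, fun x => √b * 2 ^ x])
    convex_univ (fun i => ?_) (fun i x _ => ?_)).congr fun x _ => ?_
  · fin_cases i
    · exact (convexOn_rpow_left (by positivity)).smul (Real.sqrt_nonneg a)
    · exact (convexOn_rpow_left two_pos).smul (Real.sqrt_nonneg b)
  · fin_cases i <;> dsimp <;> positivity
  · simp [Fin.sum_univ_two, mul_pow, Real.sq_sqrt ha, Real.sq_sqrt hb, sqrt_two_rpow_sq]

theorem stmt_2_general (a b c : ℝ) (ha : 0 < a) (hb : 0 < b) :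
    ConvexOn ℝ (Set.Ioi (0 : ℝ))
      (fun t : ℝ => t * Real.sqrt (a * (2 : ℝ) ^ (c / t) + b * ((2 : ℝ) ^ (c / t)) ^ 2)) := by
  have hpersp := (convexOn_sqrt_mul_two_rpow_add ha.le hb.le).perspective c
  rw [show {t : ℝ | 0 < t ∧ t⁻¹ • c ∈ Set.univ} = Set.Ioi 0 by ext; simp] at hpersp
  exact hpersp.congr fun t _ => by simp only [smul_eq_mul, div_eq_inv_mul]

theorem stmt_2 (a b c : ℝ) (ha : 0 < a) (hb : 0 < b) (hc : 0 < c) :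
    ConvexOn ℝ (Set.Ioi (0 : ℝ))
      (fun t : ℝ => t * Real.sqrt (a * (2 : ℝ) ^ (c / t) + b * ((2 : ℝ) ^ (c / t)) ^ 2)) :=
  stmt_2_general a b c ha hb
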